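/- arXiv:1004.0934 — 3 statements merged into one kernel-verified Lean document; each statement's English description precedes it below -/
import Mathlib

section
/- Let H be a normal subgroup of a finite group G, K ≤ G, and g ∈ G. Then p_g^{(1,1)}(H,K) = p_g^{(1,1)}(K,H), i.e., |{(x,y) ∈ H × K : [x,y] = g}| = |{(y,x) ∈ K × H : [y,x] = g}|. -/
open scoped BigOperators

/-- The commutator `[a,b] = a⁻¹b⁻¹ab`. -/
def gcomm {G : Type*} [Group G] (a b : G) : G := a⁻¹ * b⁻¹ * a * b

/-- Left-normed iterated commutator of a list of group elements. -/
def lcomm {G : Type*} [Group G] : List G → G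
  | [] => 1
  | a :: t => t.foldl gcomm a

/-- `pgen H K n m g` is the probability that a randomly chosen left-normed commutator
of weight `n + m` on `Hⁿ × Kᵐ` equals `g`. -/
noncomputable def pgen {G : Type*} [Group G] (H K : Subgroup G) (n m : ℕ) (g : G) : ℚ :=
  (Nat.card {z : (Fin n → H) × (Fin m → K) //
      lcomm (List.ofFn (fun i => ((z.1 i : G))) ++ List.ofFn (fun j => ((z.2 j : G)))) = g} : ℚ) /
    ((Nat.card H : ℚ) ^ n * (Nat.card K : ℚ) ^ m)

theorem gcomm_inv_conj {G : Type*} [Group G] (x y : G) :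
    gcomm y⁻¹ (y⁻¹ * x * y) = gcomm x y := by
  simp only [gcomm]
  group

theorem gcomm_conj_inv {G : Type*} [Group G] (a b : G) :
    gcomm (a⁻¹ * b * a) a⁻¹ = gcomm a b := by
  simp only [gcomm]
  group

def commPairsSwapEquiv {G : Type*} [Group G] (H K : Subgroup G) [hH : H.Normal] (g : G) :
    {p : H × K // gcomm (p.1 : G) (p.2 : G) = g} ≃
      {p : K × H // gcomm (p.1 : G) (p.2 : G) = g} where
  toFun p := ⟨(p.1.2⁻¹, ⟨(p.1.2 : G)⁻¹ * p.1.1 * p.1.2, hH.conj_mem' _ p.1.1.2 _⟩), by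
    simpa only [InvMemClass.coe_inv, gcomm_inv_conj] using p.2⟩
  invFun p := ⟨(⟨(p.1.1 : G)⁻¹ * p.1.2 * p.1.1, hH.conj_mem' _ p.1.2.2 _⟩, p.1.1⁻¹), by
    simpa only [InvMemClass.coe_inv, gcomm_conj_inv] using p.2⟩
  left_inv p := by
    ext <;> simp [mul_assoc]
  right_inv p := by
    ext <;> simp [mul_assoc]

theorem stmt8_general (G : Type*) [Group G] (H K : Subgroup G) [H.Normal] (g : G) :
    (Nat.card {p : H × K // gcomm (p.1 : G) (p.2 : G) = g}) =
      (Nat.card {p : K × H // gcomm (p.1 : G) (p.2 : G) = g}) :=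
  Nat.card_congr (commPairsSwapEquiv H K g)

theorem stmt8 (G : Type*) [Group G] [Fintype G] (H K : Subgroup G) [H.Normal] (g : G) :
    (Nat.card {p : H × K // gcomm (p.1 : G) (p.2 : G) = g}) =
      (Nat.card {p : K × H // gcomm (p.1 : G) (p.2 : G) = g}) :=
  stmt8_general G H K g
end

section
/- Let H be a normal subgroup of a finite group G, K ≤ G, and g ∈ G. Then p_g^{(1,1)}(H,K) = p_{g⁻¹}^{(1,1)}(H,K). -/
open scoped BigOperators

/-! Since `H` is normal, `(x, y) ↦ (y⁻¹xy, y⁻¹)` is an involution of `H × K`, and it sends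
`[x, y]` to `[y⁻¹xy, y⁻¹] = [x, y]⁻¹`; so it matches the solutions of `[x, y] = g` with those of
`[x, y] = g⁻¹`. -/

section

variable {G : Type*} [Group G]

theorem gcomm_conj_inv_s9 (x y : G) : gcomm (y⁻¹ * x * y) y⁻¹ = (gcomm x y)⁻¹ := by
  simp only [gcomm]; group

theorem pgen_one_one (H K : Subgroup G) (g : G) :
    pgen H K 1 1 g =
      (Nat.card {p : H × K // gcomm (p.1 : G) p.2 = g} : ℚ) / ((Nat.card H : ℚ) * Nat.card K) := by
  rw [pgen, pow_one, pow_one]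
  congr 2
  exact Nat.card_congr <|
    ((Equiv.funUnique (Fin 1) H).prodCongr (Equiv.funUnique (Fin 1) K)).subtypeEquiv
      fun _ => Iff.rfl

variable (H K : Subgroup G) [H.Normal]

def conjInvInvolution (p : H × K) : H × K :=
  (⟨(p.2 : G)⁻¹ * p.1 * p.2, by simpa using ‹H.Normal›.conj_mem _ p.1.2 (p.2 : G)⁻¹⟩, p.2⁻¹)

theorem conjInvInvolution_involutive : Function.Involutive (conjInvInvolution H K) := by
  intro p
  ext
  · simp only [conjInvInvolution, InvMemClass.coe_inv, inv_inv]; group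
  · simp [conjInvInvolution]

theorem card_gcomm_eq_inv (g : G) :
    Nat.card {p : H × K // gcomm (p.1 : G) p.2 = g} =
      Nat.card {p : H × K // gcomm (p.1 : G) p.2 = g⁻¹} :=
  Nat.card_congr <| (conjInvInvolution_involutive H K).toPerm.subtypeEquiv fun p => by
    simp only [Function.Involutive.coe_toPerm, conjInvInvolution, InvMemClass.coe_inv,
      gcomm_conj_inv_s9, inv_inj]

end

theorem stmt9_general (G : Type*) [Group G] (H K : Subgroup G) [H.Normal] (g : G) :
    pgen H K 1 1 g = pgen H K 1 1 g⁻¹ := by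
  rw [pgen_one_one, pgen_one_one, card_gcomm_eq_inv]

theorem stmt9 (G : Type*) [Group G] [Fintype G] (H K : Subgroup G) [H.Normal] (g : G) :
    pgen H K 1 1 g = pgen H K 1 1 g⁻¹ :=
  stmt9_general G H K g
end

section
/- Let G be a finite group, H, K ≤ G, g ∈ G, n, m ≥ 1. Then p_g^{(n,m)}(H,K) ≤ p_1^{(n,m)}(H,K), i.e., for fixed H, K, n, m, the probability p_g^{(n,m)}(H,K) is maximized at g = 1. -/
open scoped BigOperators

lemma lcomm_concat {G : Type*} [Group G] (l : List G) (hl : l ≠ []) (y : G) :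
    lcomm (l ++ [y]) = gcomm (lcomm l) y := by
  cases l with
  | nil => exact absurd rfl hl
  | cons a t => simp [lcomm, List.foldl_append]

lemma gcomm_key {G : Type*} [Group G] {w g y y0 : G}
    (h1 : gcomm w y = g) (h2 : gcomm w y0 = g) : gcomm w (y * y0⁻¹) = 1 := by
  have h : w⁻¹ * y⁻¹ * w * y = w⁻¹ * y0⁻¹ * w * y0 := h1.trans h2.symm
  have h3 : y⁻¹ * w * y = y0⁻¹ * w * y0 := by
    calc y⁻¹ * w * y = w * (w⁻¹ * y⁻¹ * w * y) := by group
    _ = w * (w⁻¹ * y0⁻¹ * w * y0) := by rw [h]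
    _ = y0⁻¹ * w * y0 := by group
  show w⁻¹ * (y * y0⁻¹)⁻¹ * w * (y * y0⁻¹) = 1
  calc w⁻¹ * (y * y0⁻¹)⁻¹ * w * (y * y0⁻¹)
      = w⁻¹ * y0 * (y⁻¹ * w * y) * y0⁻¹ := by group
    _ = w⁻¹ * y0 * (y0⁻¹ * w * y0) * y0⁻¹ := by rw [h3]
    _ = 1 := by group

theorem stmt19 (G : Type*) [Group G] [Fintype G] (H K : Subgroup G) (n m : ℕ)
    (hn : 1 ≤ n) (hm : 1 ≤ m) (g : G) :
    pgen H K n m g ≤ pgen H K n m 1 := by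
  obtain ⟨m', rfl⟩ : ∃ m', m = m' + 1 := ⟨m - 1, by omega⟩
  set w : (Fin n → H) × (Fin m' → K) → G := fun q =>
    lcomm (List.ofFn (fun i => ((q.1 i : G))) ++ List.ofFn (fun j => ((q.2 j : G)))) with hw
  have hsplit : ∀ z : (Fin n → H) × (Fin (m' + 1) → K),
      lcomm (List.ofFn (fun i => ((z.1 i : G))) ++ List.ofFn (fun j => ((z.2 j : G))))
        = gcomm (w (z.1, fun j => z.2 j.castSucc)) (z.2 (Fin.last m') : G) := by
    intro z
    rw [List.ofFn_succ' (fun j => ((z.2 j : G))), List.concat_eq_append, ← List.append_assoc,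
      lcomm_concat]
    intro h
    have := congrArg List.length h
    simp at this
    omega
  classical
  set y0 : ((Fin n → H) × (Fin m' → K)) → K := fun q =>
    if h : ∃ y : K, gcomm (w q) (y : G) = g then h.choose else 1 with hy0
  set F : {z : (Fin n → H) × (Fin (m' + 1) → K) //
      lcomm (List.ofFn (fun i => ((z.1 i : G))) ++ List.ofFn (fun j => ((z.2 j : G)))) = g} →
    {z : (Fin n → H) × (Fin (m' + 1) → K) //
      lcomm (List.ofFn (fun i => ((z.1 i : G))) ++ List.ofFn (fun j => ((z.2 j : G)))) = 1} :=
    fun z => ⟨(z.1.1, Fin.snoc (fun j : Fin m' => z.1.2 j.castSucc)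
        (z.1.2 (Fin.last m') * (y0 (z.1.1, fun j : Fin m' => z.1.2 j.castSucc))⁻¹)), by
      set q := (z.1.1, fun j : Fin m' => z.1.2 j.castSucc)
      have hz := z.2
      rw [hsplit] at hz
      have hex : ∃ y : K, gcomm (w q) (y : G) = g := ⟨z.1.2 (Fin.last m'), hz⟩
      have hy0q : gcomm (w q) ((y0 q : K) : G) = g := by
        rw [hy0]; simp only [dif_pos hex]; exact hex.choose_spec
      rw [hsplit]
      simp only [Fin.snoc_castSucc, Fin.snoc_last]
      push_cast
      exact gcomm_key hz hy0q⟩ with hF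
  have hinj : Function.Injective F := by
    intro z1 z2 h
    have h' := congrArg Subtype.val h
    rw [hF] at h'
    simp only [Prod.mk.injEq] at h'
    obtain ⟨h1, h2⟩ := h'
    have hpre : ∀ j : Fin m', z1.1.2 j.castSucc = z2.1.2 j.castSucc := by
      intro j
      have := congrFun h2 j.castSucc
      simpa [Fin.snoc_castSucc] using this
    have hq : (z1.1.1, fun j : Fin m' => z1.1.2 j.castSucc) = (z2.1.1, fun j : Fin m' => z2.1.2 j.castSucc) := by
      ext <;> simp [h1, hpre]
    have hlast : z1.1.2 (Fin.last m') = z2.1.2 (Fin.last m') := by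
      have := congrFun h2 (Fin.last m')
      simp only [Fin.snoc_last] at this
      rw [hq] at this
      exact mul_right_cancel this
    apply Subtype.ext
    apply Prod.ext h1
    funext i
    induction i using Fin.lastCases with
    | last => exact hlast
    | cast j => exact hpre j
  have hcard := Nat.card_le_card_of_injective F hinj
  unfold pgen
  rw [div_le_div_iff_of_pos_right]
  · exact_mod_cast hcard
  · have h1 : 0 < Nat.card H := Nat.card_pos
    have h2 : 0 < Nat.card K := Nat.card_pos
    positivity
end
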